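/- arXiv:2408.10534 — 5 statements merged into one kernel-verified Lean document; each statement's English description precedes it below -/
import Mathlib

section
/- If gcd(n, p) = 1, then the number of monic irreducible polynomials of degree n over F_p with zero coefficient on x^{n-1} equals (1/(np)) * Σ_{d | n} μ(n/d) p^d. -/
/-!
Each element of a field `K` with `q ^ n` elements has a monic irreducible minimal polynomial over
`𝔽_q` of degree dividing `n`, and conversely a monic irreducible polynomial of degree `d ∣ n`
splits in `K` into `d` distinct roots. Counting the elements of `K` by their minimal polynomials
gives Gauss's formula `∑_{d ∣ n} d N_d = q ^ n` for the number `N_d` of monic irreducible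
polynomials of degree `d`, and Möbius inversion gives
`n N_n = ∑_{d ∣ n} μ(n / d) q ^ d`.

When `(n : 𝔽_q) ≠ 0`, the shift `f(X) ↦ f(X + a)` adds `n a` to the coefficient of `X ^ (n - 1)`
of a monic polynomial of degree `n`, so `(a, f) ↦ f(X + a)` is a bijection from
`𝔽_q × {monic irreducible of degree n with vanishing trace coefficient}` onto all monic
irreducible polynomials of degree `n`.
-/

open Polynomial Module

def monicIrreducible (F : Type*) [Field F] (d : ℕ) : Set F[X] :=
  {f | f.Monic ∧ f.natDegree = d ∧ Irreducible f}

theorem Polynomial.Monic.rootSet_eq_setOf_minpoly_eq {F K : Type*} [Field F] [Field K]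
    [Algebra F K] {f : F[X]} (hm : f.Monic) (hf : Irreducible f) :
    f.rootSet K = {α | minpoly F α = f} := by
  ext α
  rw [mem_rootSet_of_ne hm.ne_zero, Set.mem_ofPred_eq]
  exact ⟨fun h => (minpoly.eq_of_irreducible_of_monic hf h hm).symm,
    fun h => h ▸ minpoly.aeval F α⟩

section FiniteExtension

variable {F K : Type*} [Field F] [Finite F] [Field K] [Algebra F K] [Finite K]

theorem Irreducible.splits_map_of_natDegree_dvd_finrank {f : F[X]} (hf : Irreducible f)
    (hd : f.natDegree ∣ finrank F K) : (f.map (algebraMap F K)).Splits := by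
  have hK : Nat.card K = Nat.card F ^ finrank F K := natCard_eq_pow_finrank
  have hsplit : ((X ^ Nat.card F ^ finrank F K - X : F[X]).map (algebraMap F K)).Splits := by
    rw [Polynomial.map_sub, Polynomial.map_pow, map_X, ← hK]
    exact splits_X_pow_nat_card_sub_X
  refine hsplit.of_dvd (Polynomial.map_ne_zero ?_)
    (Polynomial.map_dvd _ (hf.natDegree_dvd_iff_dvd_X_pow_card_pow_sub_X.1 hd))
  exact FiniteField.X_pow_card_pow_sub_X_ne_zero _ finrank_pos.ne' Finite.one_lt_card

theorem Irreducible.card_rootSet_of_natDegree_dvd_finrank {f : F[X]} (hf : Irreducible f)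
    (hd : f.natDegree ∣ finrank F K) : Fintype.card (f.rootSet K) = f.natDegree :=
  card_rootSet_eq_natDegree (PerfectField.separable_of_irreducible hf)
    (hf.splits_map_of_natDegree_dvd_finrank hd)

theorem range_minpoly_eq_setOf_natDegree_dvd_finrank :
    Set.range (minpoly F : K → F[X]) =
      {f | f.Monic ∧ Irreducible f ∧ f.natDegree ∣ finrank F K} := by
  ext f
  constructor
  · rintro ⟨α, rfl⟩
    have hα : IsIntegral F α := .of_finite F α
    exact ⟨minpoly.monic hα, minpoly.irreducible hα, minpoly.degree_dvd hα⟩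
  · rintro ⟨hm, hf, hd⟩
    have hroot : (f.rootSet K).Nonempty := by
      rw [← Set.nonempty_coe_sort, ← Fintype.card_pos_iff,
        hf.card_rootSet_of_natDegree_dvd_finrank hd]
      exact hf.natDegree_pos
    rwa [hm.rootSet_eq_setOf_minpoly_eq hf] at hroot

open Finset in
theorem natCard_eq_sum_divisors_mul_card_monicIrreducible :
    Nat.card K = ∑ d ∈ (finrank F K).divisors, d * Nat.card (monicIrreducible F d) := by
  classical
  have := Fintype.ofFinite K
  set n := finrank F K
  let T := univ.image (minpoly F : K → F[X])
  have hT (f : F[X]) : f ∈ T ↔ f.Monic ∧ Irreducible f ∧ f.natDegree ∣ n := by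
    simpa [T] using Set.ext_iff.1 range_minpoly_eq_setOf_natDegree_dvd_finrank f
  have hfiber (f : F[X]) (hf : f ∈ T) : #{α : K | minpoly F α = f} = f.natDegree := by
    obtain ⟨hm, hirr, hd⟩ := (hT f).1 hf
    rw [← hirr.card_rootSet_of_natDegree_dvd_finrank (K := K) hd, ← Fintype.card_subtype]
    exact Fintype.card_congr (Equiv.setCongr (hm.rootSet_eq_setOf_minpoly_eq hirr).symm)
  have hlevel (d : ℕ) (hd : d ∈ n.divisors) :
      #{f ∈ T | f.natDegree = d} = Nat.card (monicIrreducible F d) := by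
    have hset : monicIrreducible F d = ↑({f ∈ T | f.natDegree = d}) := by
      ext f
      simp only [monicIrreducible, Set.mem_ofPred_eq, coe_filter, hT]
      constructor
      · rintro ⟨hm, rfl, hirr⟩
        exact ⟨⟨hm, hirr, Nat.dvd_of_mem_divisors hd⟩, rfl⟩
      · rintro ⟨⟨hm, hirr, -⟩, rfl⟩
        exact ⟨hm, rfl, hirr⟩
    rw [hset, Nat.card_coe_set_eq, Set.ncard_coe_finset]
  calc Nat.card K = #(univ : Finset K) := Nat.card_eq_fintype_card
    _ = ∑ f ∈ T, #{α : K | minpoly F α = f} := card_eq_sum_card_image _ _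
    _ = ∑ f ∈ T, f.natDegree := sum_congr rfl hfiber
    _ = ∑ d ∈ n.divisors, ∑ f ∈ T with f.natDegree = d, f.natDegree :=
      (sum_fiberwise_of_maps_to
        (fun f hf => Nat.mem_divisors.2 ⟨((hT f).1 hf).2.2, finrank_pos.ne'⟩) _).symm
    _ = ∑ d ∈ n.divisors, d * Nat.card (monicIrreducible F d) := by
      refine sum_congr rfl fun d hd => ?_
      rw [sum_congr rfl fun f hf => (mem_filter.1 hf).2, sum_const, smul_eq_mul, hlevel d hd,
        mul_comm]

end FiniteExtension

theorem sum_divisors_mul_card_monicIrreducible_eq_pow (F : Type*) [Field F] [Finite F] {n : ℕ}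
    (hn : n ≠ 0) : ∑ d ∈ n.divisors, d * Nat.card (monicIrreducible F d) = Nat.card F ^ n := by
  obtain ⟨p, _⟩ := CharP.exists F
  have : Fact p.Prime := ⟨CharP.char_is_prime F p⟩
  have : NeZero n := ⟨hn⟩
  rw [← FiniteField.natCard_extension F p n,
    natCard_eq_sum_divisors_mul_card_monicIrreducible (F := F), FiniteField.finrank_extension]

open ArithmeticFunction in
theorem natCast_mul_card_monicIrreducible_eq_sum_moebius (F : Type*) [Field F] [Finite F]
    {n : ℕ} (hn : 0 < n) :
    (n : ℤ) * Nat.card (monicIrreducible F n) =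
      ∑ d ∈ n.divisors, moebius (n / d) * (Nat.card F : ℤ) ^ d := by
  have gauss (m : ℕ) (hm : 0 < m) :
      ∑ d ∈ m.divisors, (d : ℤ) * Nat.card (monicIrreducible F d) = (Nat.card F : ℤ) ^ m := by
    exact_mod_cast sum_divisors_mul_card_monicIrreducible_eq_pow F hm.ne'
  rw [← sum_eq_iff_sum_mul_moebius_eq.1 gauss n hn, ← Nat.sum_divisorsAntidiagonal' fun a b =>
    moebius a * (Nat.card F : ℤ) ^ b]
  simp only [Int.cast_id]

theorem Polynomial.coeff_taylor_natDegree_sub_one {R : Type*} [CommRing R] (f : R[X]) (r : R) :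
    (taylor r f).coeff (f.natDegree - 1) =
      f.coeff (f.natDegree - 1) + f.natDegree * r * f.leadingCoeff := by
  set n := f.natDegree
  rcases Nat.eq_zero_or_pos n with h0 | hpos
  · rw [h0, eq_C_of_natDegree_eq_zero h0]
    simp
  have hdeg : (hasseDeriv (n - 1) f).natDegree < 2 := by
    have := natDegree_hasseDeriv_le f (n - 1)
    omega
  have hsucc : 1 + (n - 1) = n := by omega
  rw [taylor_coeff, eval_eq_sum_range' hdeg, Finset.sum_range_succ, Finset.sum_range_one,
    hasseDeriv_coeff, hasseDeriv_coeff, zero_add, hsucc, Nat.choose_self,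
    ← Nat.choose_symm_of_eq_add hsucc.symm, Nat.choose_one_right, leadingCoeff]
  push_cast
  ring

section TaylorShift

variable {F : Type*} [Field F] {n : ℕ}

theorem taylor_mem_monicIrreducible {f : F[X]} (hf : f ∈ monicIrreducible F n) (a : F) :
    taylor a f ∈ monicIrreducible F n := by
  obtain ⟨hm, hdeg, hirr⟩ := hf
  refine ⟨?_, by rw [natDegree_taylor, hdeg], (MulEquiv.irreducible_iff (taylorEquiv a)).2 hirr⟩
  rw [Monic, leadingCoeff_taylor, hm.leadingCoeff]

theorem coeff_taylor_of_mem_monicIrreducible {f : F[X]} (hf : f ∈ monicIrreducible F n) (a : F) :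
    (taylor a f).coeff (n - 1) = f.coeff (n - 1) + n * a := by
  obtain ⟨hm, rfl, -⟩ := hf
  rw [coeff_taylor_natDegree_sub_one, hm.leadingCoeff, mul_one]

noncomputable def taylorEquivMonicIrreducible (hn : (n : F) ≠ 0) :
    F × {f ∈ monicIrreducible F n | f.coeff (n - 1) = 0} ≃ monicIrreducible F n where
  toFun x := ⟨taylor x.1 x.2, taylor_mem_monicIrreducible x.2.2.1 x.1⟩
  invFun g :=
    (g.1.coeff (n - 1) / n,
      ⟨taylor (-(g.1.coeff (n - 1) / n)) g, taylor_mem_monicIrreducible g.2 _, by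
        rw [coeff_taylor_of_mem_monicIrreducible g.2, mul_neg, mul_div_cancel₀ _ hn,
          add_neg_cancel]⟩)
  left_inv := by
    rintro ⟨a, f, hf, hf0⟩
    have ha : (taylor a f).coeff (n - 1) / n = a := by
      rw [coeff_taylor_of_mem_monicIrreducible hf, hf0, zero_add, mul_div_cancel_left₀ _ hn]
    ext
    · exact ha
    · simp only [ha, taylor_taylor, neg_add_cancel, taylor_zero]
  right_inv g := by
    ext1
    exact (taylor_taylor _ _ _).trans (by rw [add_neg_cancel, taylor_zero])

theorem card_monicIrreducible_eq_card_mul (hn : (n : F) ≠ 0) :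
    Nat.card (monicIrreducible F n) =
      Nat.card F * Nat.card {f ∈ monicIrreducible F n | f.coeff (n - 1) = 0} := by
  rw [← Nat.card_prod, Nat.card_congr (taylorEquivMonicIrreducible hn)]

end TaylorShift

/-- If `gcd(n, p) = 1`, the number of monic irreducible polynomials of degree `n`
over `F_p` with zero coefficient on `x^(n-1)` equals `(1/(n p)) * Σ_{d ∣ n} μ(n/d) p^d`.
Stated multiplied through by `n * p`. -/
theorem stmt_1 (p n : ℕ) (hp : p.Prime) (hn : 0 < n) (hcop : Nat.gcd n p = 1) :
    (n : ℤ) * (p : ℤ) * Nat.card {f : Polynomial (ZMod p) //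
        f.Monic ∧ f.natDegree = n ∧ Irreducible f ∧ f.coeff (n - 1) = 0} =
      ∑ d ∈ n.divisors, ArithmeticFunction.moebius (n / d) * (p : ℤ) ^ d := by
  have : Fact p.Prime := ⟨hp⟩
  have hnp : (n : ZMod p) ≠ 0 := by
    rw [Ne, ZMod.natCast_eq_zero_iff]
    exact hp.coprime_iff_not_dvd.1 (Nat.coprime_comm.1 hcop)
  have htrace : Nat.card {f : (ZMod p)[X] //
      f.Monic ∧ f.natDegree = n ∧ Irreducible f ∧ f.coeff (n - 1) = 0} =
        Nat.card {f ∈ monicIrreducible (ZMod p) n | f.coeff (n - 1) = 0} :=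
    Nat.card_congr (Equiv.subtypeEquivRight fun f => by
      simp only [monicIrreducible, Set.mem_ofPred_eq, and_assoc])
  have gauss := natCast_mul_card_monicIrreducible_eq_sum_moebius (ZMod p) hn
  rw [card_monicIrreducible_eq_card_mul hnp, Nat.card_zmod] at gauss
  rw [htrace, ← gauss]
  push_cast
  ring
end

section
/- Let f ∈ F_p[x] be monic of prime degree r with gcd(r, p) = 1, with zero x^{r-1} coefficient, and suppose f is a power π^e (e > 1) of a single monic irreducible polynomial π ∈ F_p[x]. Then f = x^r. -/
open Polynomial

/-- Let `f ∈ F_p[x]` be monic of prime degree `r ≠ p`, with zero `x^(r-1)` coefficient,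
and suppose `f = π^e` with `π` monic irreducible and `e > 1`. Then `f = x^r`. -/
theorem stmt_4 (p r : ℕ) (hp : p.Prime) (hr : r.Prime) (hrp : r ≠ p)
    (f : Polynomial (ZMod p)) (hmonic : f.Monic) (hdeg : f.natDegree = r)
    (htrace : f.coeff (r - 1) = 0)
    (hpow : ∃ (π : Polynomial (ZMod p)) (e : ℕ),
      π.Monic ∧ Irreducible π ∧ 1 < e ∧ f = π ^ e) :
    f = X ^ r := by
  haveI : Fact p.Prime := ⟨hp⟩
  obtain ⟨π, e, hπm, hπirr, he, hfe⟩ := hpow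
  have hπ0 : π ≠ 0 := hπm.ne_zero
  have hdegmul : e * π.natDegree = r := by
    rw [← hdeg, hfe, natDegree_pow]
  have hπd1 : π.natDegree ≠ 0 := by
    intro h
    rw [h, mul_zero] at hdegmul
    exact hr.ne_zero hdegmul.symm
  -- e divides r, e > 1 so e = r and natDegree π = 1
  have hedvd : e ∣ r := ⟨π.natDegree, hdegmul.symm⟩
  have her : e = r := ((Nat.Prime.eq_one_or_self_of_dvd hr e hedvd).resolve_left (by omega))
  have hπd : π.natDegree = 1 := by
    have := hdegmul
    rw [her] at this
    have hr0 := hr.pos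
    nlinarith [Nat.one_le_iff_ne_zero.mpr hπd1]
  have hπeq : π = X + C (π.coeff 0) := hπm.eq_X_add_C hπd
  set c := π.coeff 0
  have hcoeff : f.coeff (r - 1) = c ^ (r - (r-1)) * r.choose (r - 1) := by
    rw [hfe, her, hπeq, coeff_X_add_C_pow]
  have h1 : r - (r - 1) = 1 := by omega
  have hch : r.choose (r - 1) = r := by
    rw [← Nat.choose_symm (by omega : r - 1 ≤ r), h1, Nat.choose_one_right]
  have hc0 : c * (r : ZMod p) = 0 := by
    rw [htrace, h1, hch, pow_one] at hcoeff
    exact hcoeff.symm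
  have hrne : (r : ZMod p) ≠ 0 := by
    rw [Ne, ZMod.natCast_eq_zero_iff]
    intro h
    exact hrp ((Nat.prime_dvd_prime_iff_eq hp hr).mp h).symm
  have hc : c = 0 := by
    rcases mul_eq_zero.mp hc0 with h | h
    · exact h
    · exact absurd h hrne
  rw [hfe, her, hπeq, hc, map_zero, add_zero]
end

section
/- Let p be odd, ζ ∈ Z_p with x^2 + ζ irreducible mod p, and A, B, C, A', B', C' ∈ Z_p with p^k | B, C, B', C'. If (x^2 + pA + ζ)^2 - p^2(Bx + C)^2 ≡ (x^2 + pA' + ζ)^2 - p^2(B'x + C')^2 (mod p^{2k+3}), then A ≡ A' (mod p^{2k+2}). -/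
/-!
Put `a = pA + ζ`, `a' = pA' + ζ`, `N = p^(2k+2)` and `B = p^k b`, etc. The `x²` coefficient gives
`a - a' = N e`, and reading the three lower coefficients modulo `pN` and then modulo `p` yields
`2e = b² - b'²`, `bc = b'c'` and `2eζ = c² - c'²` in `𝔽_p`. Hence `c² - ζb² = c'² - ζb'²` and
`bc = b'c'`, i.e. `(c + b√-ζ)² = (c' + b'√-ζ)²` in `𝔽_{p²}`; as `-ζ` is not a square this forces
`b² = b'²`, so `e ≡ 0`, i.e. `pN ∣ a - a' = p(A - A')`.
-/

open Polynomial

lemma not_isSquare_neg_of_irreducible_X_sq_add_C {K : Type*} [Field K] {z : K}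
    (h : Irreducible (X ^ 2 + C z)) : ¬IsSquare (-z) := by
  rw [← sub_neg_eq_add, ← map_neg, X_pow_sub_C_irreducible_iff_of_prime Nat.prime_two] at h
  rintro ⟨r, hr⟩
  exact h r (by rw [hr, sq])

lemma eq_zero_of_sq_eq_neg_mul_sq {K : Type*} [Field K] {z x y : K} (hz : ¬IsSquare (-z))
    (h : x ^ 2 = -z * y ^ 2) : y = 0 := by
  by_contra hy
  exact hz ⟨x / y, by field_simp; linear_combination -h⟩

lemma sq_eq_sq_of_mul_eq_mul_of_sq_sub_mul_sq_eq {K : Type*} [Field K] {z b c b' c' : K}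
    (hz : ¬IsSquare (-z)) (hmul : b * c = b' * c')
    (hnorm : c ^ 2 - z * b ^ 2 = c' ^ 2 - z * b' ^ 2) :
    b ^ 2 = b' ^ 2 := by
  -- Eliminating `c` gives `c' ^ 2 = -z * b ^ 2` as soon as `b ^ 2 ≠ b' ^ 2`.
  have key : ∀ {b c b' c' : K}, b * c = b' * c' → c ^ 2 - z * b ^ 2 = c' ^ 2 - z * b' ^ 2 →
      b ^ 2 - b' ^ 2 ≠ 0 → b = 0 := fun {b c b' c'} hmul hnorm hne ↦
    eq_zero_of_sq_eq_neg_mul_sq (x := c') hz <| mul_right_cancel₀ hne <| by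
      linear_combination (b * c + b' * c') * hmul - b ^ 2 * hnorm
  by_contra hne
  have hne : b ^ 2 - b' ^ 2 ≠ 0 := sub_ne_zero.mpr hne
  have hb := key hmul hnorm hne
  have hb' := key hmul.symm hnorm.symm (by rwa [← neg_sub, neg_ne_zero])
  simp [hb, hb'] at hne

lemma sq_add_C_sq_sub_C_mul_sq {R : Type*} [CommRing R] (a e b c : R) :
    (X ^ 2 + C a) ^ 2 - C e * (C b * X + C c) ^ 2 =
      X ^ 4 + C (2 * a - e * b ^ 2) * X ^ 2 + C (-(2 * e * b * c)) * X + C (a ^ 2 - e * c ^ 2) := by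
  simp only [map_sub, map_mul, map_pow, map_neg, map_ofNat]
  ring

lemma coeff_sq_add_C_sq_sub_C_mul_sq {R : Type*} [CommRing R] (a e b c : R) :
    ((X ^ 2 + C a) ^ 2 - C e * (C b * X + C c) ^ 2).coeff 2 = 2 * a - e * b ^ 2 ∧
      ((X ^ 2 + C a) ^ 2 - C e * (C b * X + C c) ^ 2).coeff 1 = -(2 * e * b * c) ∧
      ((X ^ 2 + C a) ^ 2 - C e * (C b * X + C c) ^ 2).coeff 0 = a ^ 2 - e * c ^ 2 := by
  simp only [sq_add_C_sq_sub_C_mul_sq, coeff_add, coeff_C_mul_X_pow, coeff_C_mul_X, coeff_C,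
    coeff_X_pow]
  norm_num

namespace PadicInt

variable {p : ℕ} [Fact p.Prime]

lemma toZMod_eq_zero_iff_dvd (x : ℤ_[p]) : toZMod x = 0 ↔ (p : ℤ_[p]) ∣ x := by
  rw [← RingHom.mem_ker, ker_toZMod, maximalIdeal_eq_span_p, Ideal.mem_span_singleton]

lemma isUnit_two (hp : p ≠ 2) : IsUnit (2 : ℤ_[p]) := by
  rw [isUnit_iff, ← Nat.cast_ofNat, norm_natCast_eq_one_iff,
    Nat.coprime_primes Fact.out Nat.prime_two]
  exact hp

lemma pow_dvd_coeff_sub_of_map_toZModPow_eq {n : ℕ} {f g : ℤ_[p][X]}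
    (h : f.map (toZModPow n) = g.map (toZModPow n)) (i : ℕ) :
    (p : ℤ_[p]) ^ n ∣ f.coeff i - g.coeff i := by
  rw [← Ideal.mem_span_singleton, ← ker_toZModPow, RingHom.mem_ker, map_sub, ← coeff_map,
    ← coeff_map, h, sub_self]

lemma mul_dvd_sub_of_dvd_coeff_sub {ζ a a' b c b' c' N : ℤ_[p]} (hp : p ≠ 2) (hN : N ≠ 0)
    (hζ : ¬IsSquare (-toZMod ζ)) (ha : toZMod a = toZMod ζ) (ha' : toZMod a' = toZMod ζ)
    (h2 : p * N ∣ 2 * (a - a') - N * (b ^ 2 - b' ^ 2))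
    (h1 : p * N ∣ 2 * N * (b * c - b' * c'))
    (h0 : p * N ∣ (a - a') * (a + a') - N * (c ^ 2 - c' ^ 2)) :
    p * N ∣ a - a' := by
  have h2unit := isUnit_two (p := p) hp
  have h2res : IsUnit (2 : ZMod p) := by simpa only [map_ofNat] using h2unit.map toZMod
  have cancel (x : ℤ_[p]) : p * N ∣ N * x ↔ toZMod x = 0 := by
    rw [toZMod_eq_zero_iff_dvd, mul_comm, mul_dvd_mul_iff_left hN]
  obtain ⟨e, he⟩ : N ∣ a - a' := by
    rw [← h2unit.dvd_mul_left]
    exact (dvd_sub_left (dvd_mul_right N _)).mp ((dvd_mul_left N p).trans h2)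
  rw [he, show 2 * (N * e) - N * (b ^ 2 - b' ^ 2) = N * (2 * e - (b ^ 2 - b' ^ 2)) by ring,
    cancel] at h2
  rw [mul_comm 2 N, mul_assoc, cancel, map_mul, map_ofNat, h2res.mul_right_eq_zero] at h1
  rw [he, show N * e * (a + a') - N * (c ^ 2 - c' ^ 2) =
    N * (e * (a + a') - (c ^ 2 - c' ^ 2)) by ring, cancel] at h0
  simp only [map_sub, map_mul, map_add, map_pow, map_ofNat, ha, ha'] at h2 h1 h0
  have hsq := sq_eq_sq_of_mul_eq_mul_of_sq_sub_mul_sq_eq hζ (sub_eq_zero.mp h1)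
    (by linear_combination toZMod ζ * h2 - h0)
  have h2e : (2 : ZMod p) * toZMod e = 0 := by linear_combination h2 + hsq
  rw [he, cancel]
  exact h2res.mul_right_eq_zero.mp h2e

end PadicInt

/-- Claim 2: if `x² + ζ` is irreducible mod `p`, `p^k ∣ B, C, B', C'`, and
`(x² + pA + ζ)² - p²(Bx + C)² ≡ (x² + pA' + ζ)² - p²(B'x + C')² (mod p^(2k+3))`
coefficientwise, then `A ≡ A' (mod p^(2k+2))`. -/
theorem stmt_11 (p : ℕ) [Fact p.Prime] (hodd : p ≠ 2) (ζ A B C' A' B' C'' : ℤ_[p]) (k : ℕ)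
    (hirr : Irreducible (X ^ 2 + C (PadicInt.toZMod ζ) : Polynomial (ZMod p)))
    (hB : (p : ℤ_[p]) ^ k ∣ B) (hC : (p : ℤ_[p]) ^ k ∣ C')
    (hB' : (p : ℤ_[p]) ^ k ∣ B') (hC' : (p : ℤ_[p]) ^ k ∣ C'')
    (hcong : ((X ^ 2 + C ((p : ℤ_[p]) * A + ζ)) ^ 2 -
          C ((p : ℤ_[p]) ^ 2) * (C B * X + C C') ^ 2).map
            (PadicInt.toZModPow (2 * k + 3)) =
        ((X ^ 2 + C ((p : ℤ_[p]) * A' + ζ)) ^ 2 -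
          C ((p : ℤ_[p]) ^ 2) * (C B' * X + C C'') ^ 2).map
            (PadicInt.toZModPow (2 * k + 3))) :
    (p : ℤ_[p]) ^ (2 * k + 2) ∣ (A - A') := by
  obtain ⟨b, rfl⟩ := hB
  obtain ⟨c, rfl⟩ := hC
  obtain ⟨b', rfl⟩ := hB'
  obtain ⟨c', rfl⟩ := hC'
  have hp : (p : ℤ_[p]) ≠ 0 := Nat.cast_ne_zero.mpr (Fact.out : p.Prime).ne_zero
  have hres (x : ℤ_[p]) : PadicInt.toZMod ((p : ℤ_[p]) * x + ζ) = PadicInt.toZMod ζ := by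
    simp
  have hcoeff := PadicInt.pow_dvd_coeff_sub_of_map_toZModPow_eq hcong
  rw [pow_succ'] at hcoeff
  have h2 := hcoeff 2
  have h1 := hcoeff 1
  have h0 := hcoeff 0
  simp only [coeff_sq_add_C_sq_sub_C_mul_sq] at h2 h1 h0
  have key := PadicInt.mul_dvd_sub_of_dvd_coeff_sub (b := b) (c := c) (b' := b') (c' := c')
    (N := (p : ℤ_[p]) ^ (2 * k + 2)) hodd (pow_ne_zero _ hp)
    (not_isSquare_neg_of_irreducible_X_sq_add_C hirr) (hres A) (hres A')
    (by convert h2 using 1; ring)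
    (by convert h1.neg_right using 1; ring)
    (by convert h0 using 1; ring)
  rwa [add_sub_add_right_eq_sub, ← mul_sub, mul_dvd_mul_iff_left hp] at key
end

section
/- Let p be an odd prime. The number of distinct polynomials of the form (bx + c)^2 in (Z/p^2Z)[x], as b, c range over Z/p^2Z with c a unit, equals p^3(p-1)/2. -/
open Polynomial

lemma aux_isUnit_iff {p : ℕ} (hp : p.Prime) (x : ZMod (p ^ 2)) :
    IsUnit x ↔ ¬ p ∣ x.val := by
  haveI : NeZero (p ^ 2) := ⟨pow_ne_zero 2 hp.ne_zero⟩
  have h1 : ((x.val : ℕ) : ZMod (p ^ 2)) = x := by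
    simp [ZMod.natCast_val, ZMod.cast_id]
  constructor
  · intro hx hdvd
    rw [← h1, ZMod.isUnit_iff_coprime] at hx
    have := Nat.Coprime.coprime_dvd_right (dvd_pow_self p (two_ne_zero)) hx
    exact (hp.coprime_iff_not_dvd.mp this.symm) hdvd
  · intro hnd
    rw [← h1, ZMod.isUnit_iff_coprime]
    exact Nat.Coprime.pow_right 2 ((hp.coprime_iff_not_dvd.mpr hnd).symm)

lemma aux_isUnit_iff' {p : ℕ} (hp : p.Prime) (x : ZMod (p ^ 2)) :
    IsUnit x ↔ ZMod.castHom (dvd_pow_self p two_ne_zero) (ZMod p) x ≠ 0 := by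
  haveI : NeZero (p ^ 2) := ⟨pow_ne_zero 2 hp.ne_zero⟩
  rw [aux_isUnit_iff hp, ZMod.castHom_apply, ← ZMod.natCast_val,
    Ne, ZMod.natCast_eq_zero_iff]

lemma aux_cancel {p : ℕ} (hp : p.Prime) (d e : ZMod (p ^ 2)) (h : d * e = 0)
    (hu : IsUnit (e - d)) : d = 0 ∨ e = 0 := by
  have hde : IsUnit d ∨ IsUnit e := by
    by_contra hc
    push_neg at hc
    have h1 : ZMod.castHom (dvd_pow_self p two_ne_zero) (ZMod p) d = 0 := by
      by_contra hne; exact hc.1 ((aux_isUnit_iff' hp d).mpr hne)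
    have h2 : ZMod.castHom (dvd_pow_self p two_ne_zero) (ZMod p) e = 0 := by
      by_contra hne; exact hc.2 ((aux_isUnit_iff' hp e).mpr hne)
    rw [aux_isUnit_iff' hp] at hu
    apply hu
    rw [map_sub, h1, h2, sub_zero]
  rcases hde with ⟨u, rfl⟩ | ⟨u, rfl⟩
  · exact Or.inr ((Units.mul_right_eq_zero u).mp h)
  · exact Or.inl ((Units.mul_left_eq_zero u).mp h)

lemma aux_expand {R : Type*} [CommRing R] (b c : R) :
    (C b * X + C c) ^ 2 = C (b * b) * X ^ 2 + C (2 * (b * c)) * X + C (c * c) := by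
  simp only [map_mul, map_ofNat]
  ring

lemma aux_two_unit {p : ℕ} (hp : p.Prime) (hodd : p ≠ 2) :
    IsUnit (2 : ZMod (p ^ 2)) := by
  rw [aux_isUnit_iff' hp]
  intro h
  rw [map_ofNat, show ((2 : ZMod p)) = ((2 : ℕ) : ZMod p) by norm_cast,
    ZMod.natCast_eq_zero_iff] at h
  exact hodd ((Nat.prime_dvd_prime_iff_eq hp Nat.prime_two).mp h)

lemma aux_inj {p : ℕ} (hp : p.Prime) (hodd : p ≠ 2) (b c b' c' : ZMod (p ^ 2))
    (hc : IsUnit c)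
    (heq : (C b * X + C c) ^ 2 = (C b' * X + C c') ^ 2) :
    (b' = b ∧ c' = c) ∨ (b' = -b ∧ c' = -c) := by
  rw [aux_expand, aux_expand] at heq
  have h0 : c * c = c' * c' := by
    have := congrArg (fun f => Polynomial.coeff f 0) heq
    simpa [coeff_add, coeff_C_mul, coeff_X_pow, coeff_C] using this
  have h1 : 2 * (b * c) = 2 * (b' * c') := by
    have := congrArg (fun f => Polynomial.coeff f 1) heq
    simpa [coeff_add, coeff_C_mul, coeff_X_pow, coeff_C, mul_assoc] using this
  have h2c : IsUnit (2 * c) := (aux_two_unit hp hodd).mul hc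
  have hcancel := aux_cancel hp (c' - c) (c' + c) (by ring_nf; linear_combination -h0)
    (by simpa [show c' + c - (c' - c) = 2 * c by ring] using h2c)
  rcases hcancel with hd | he
  · have hc' : c' = c := sub_eq_zero.mp hd
    subst hc'
    refine Or.inl ⟨?_, rfl⟩
    exact (h2c.mul_left_cancel (by linear_combination h1)).symm
  · have hc' : c' = -c := eq_neg_of_add_eq_zero_left he
    subst hc'
    refine Or.inr ⟨?_, rfl⟩
    exact neg_eq_iff_eq_neg.mp (h2c.mul_left_cancel (by linear_combination -h1))

/-- For odd `p`, the number of distinct polynomials `(bx + c)²` in `(ℤ/p²ℤ)[x]`,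
as `b, c` range over `ℤ/p²ℤ` with `c` a unit, equals `p³(p-1)/2`. -/
theorem stmt_13 (p : ℕ) (hp : p.Prime) (hodd : p ≠ 2) :
    2 * Nat.card {f : Polynomial (ZMod (p ^ 2)) //
        ∃ b c : ZMod (p ^ 2), IsUnit c ∧ f = (C b * X + C c) ^ 2} =
      p ^ 3 * (p - 1) := by
  haveI : NeZero (p ^ 2) := ⟨pow_ne_zero 2 hp.ne_zero⟩
  haveI : Fact p.Prime := ⟨hp⟩
  haveI : Fact (1 < p ^ 2) := ⟨one_lt_pow₀ hp.one_lt two_ne_zero⟩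
  set A := ZMod (p ^ 2) with hA
  set T := {f : Polynomial A // ∃ b c : A, IsUnit c ∧ f = (C b * X + C c) ^ 2} with hT
  set S := {x : A × A // IsUnit x.2} with hS
  -- bit flip lemma
  have hposq : Odd (p ^ 2) := (hp.odd_of_ne_two hodd).pow
  have hbit : ∀ c : A, IsUnit c → (2 * (-c).val < p ^ 2 ↔ ¬ (2 * c.val < p ^ 2)) := by
    intro c hc
    have hc0 : c ≠ 0 := hc.ne_zero
    have hneg : (-c).val = p ^ 2 - c.val := by rw [ZMod.neg_val, if_neg hc0]
    have hlt : c.val < p ^ 2 := ZMod.val_lt c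
    have hne : 2 * c.val ≠ p ^ 2 := by
      intro h
      exact (Nat.not_odd_iff_even.mpr ⟨c.val, by omega⟩) hposq
    omega
  have hbit' : ∀ c : A, IsUnit c →
      decide (2 * (-c).val < p ^ 2) = !decide (2 * c.val < p ^ 2) := by
    intro c hc
    by_cases h : 2 * c.val < p ^ 2 <;> simp [h, hbit c hc]
  -- the 2-to-1 map
  let Φ : S → T × Bool := fun x =>
    (⟨(C x.1.1 * X + C x.1.2) ^ 2, x.1.1, x.1.2, x.2, rfl⟩,
      decide (2 * x.1.2.val < p ^ 2))
  have hinj : Function.Injective Φ := by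
    rintro ⟨⟨b, c⟩, hc⟩ ⟨⟨b', c'⟩, hc'⟩ h
    have hpoly : (C b * X + C c) ^ 2 = (C b' * X + C c') ^ 2 :=
      congrArg Subtype.val (congrArg Prod.fst h)
    have hbits : decide (2 * c.val < p ^ 2) = decide (2 * c'.val < p ^ 2) :=
      congrArg Prod.snd h
    rcases aux_inj hp hodd b c b' c' hc hpoly with ⟨hb, hcc⟩ | ⟨hb, hcc⟩
    · subst hb; subst hcc; rfl
    · exfalso
      rw [hcc, hbit' c hc] at hbits
      exact (Bool.eq_not_self _).mp hbits
  have hsurj : Function.Surjective Φ := by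
    rintro ⟨⟨f, b, c, hc, rfl⟩, s⟩
    by_cases hcs : decide (2 * c.val < p ^ 2) = s
    · exact ⟨⟨(b, c), hc⟩, by
        simp only [Φ, Prod.mk.injEq]
        exact ⟨trivial, hcs⟩⟩
    · refine ⟨⟨(-b, -c), hc.neg⟩, ?_⟩
      simp only [Φ, Prod.mk.injEq]
      constructor
      · apply Subtype.ext
        show (C (-b) * X + C (-c)) ^ 2 = (C b * X + C c) ^ 2
        simp only [map_neg]
        ring
      · show decide (2 * (-c).val < p ^ 2) = s
        rw [hbit' c hc]
        cases s <;> simp_all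
  have e : S ≃ T × Bool := Equiv.ofBijective Φ ⟨hinj, hsurj⟩
  have e2 : S ≃ A × {c : A // IsUnit c} :=
    ⟨fun x => (x.1.1, ⟨x.1.2, x.2⟩), fun y => ⟨(y.1, y.2.1), y.2.2⟩,
      fun x => rfl, fun y => rfl⟩
  have e3 : Aˣ ≃ {c : A // IsUnit c} :=
    ⟨fun u => ⟨u, u.isUnit⟩, fun c => c.2.unit,
      fun u => Units.ext u.isUnit.unit_spec, fun c => Subtype.ext c.2.unit_spec⟩
  have hunits : Nat.card {c : A // IsUnit c} = p * (p - 1) := by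
    rw [← Nat.card_congr e3, Nat.card_eq_fintype_card, ZMod.card_units_eq_totient,
      Nat.totient_prime_pow hp (by norm_num)]
    ring
  have hcardS : Nat.card S = p ^ 2 * (p * (p - 1)) := by
    rw [Nat.card_congr e2, Nat.card_prod, hunits, Nat.card_zmod]
  have h2 : Nat.card (T × Bool) = Nat.card S := (Nat.card_congr e).symm
  rw [Nat.card_prod, Nat.card_eq_fintype_card (α := Bool), Fintype.card_bool] at h2
  calc 2 * Nat.card T = Nat.card T * 2 := by ring
    _ = Nat.card S := h2
    _ = p ^ 2 * (p * (p - 1)) := hcardS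
    _ = p ^ 3 * (p - 1) := by ring
end

section
/- Let p be odd, and f(x) = (x^2 + pαx + pβ)(x^2 - pαx + pγ) with α, β, γ ∈ Z_p and p ∤ β, p ∤ γ. Suppose p^k exactly divides β - γ and p^k | α (Case 1). Then every monic quartic g ∈ Z_p[x] with g ≡ f (mod p^{2k+4}) is reducible in Z_p[x]. -/
/-!
Write `f = F₀ G₀` with `F₀ = X² + pαX + pβ` and `G₀ = X² - pαX + pγ`. These two quadratics agree
modulo `p^(k+1)`, their constant terms differ by exactly `p^(k+1)` times a unit, and so their
resultant is `p^(2(k+1))` times a unit. Newton's method for the factorization `g = F G` then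
converges: an error `p^(n+j)` in `g - F G` (with `n = k + 1`) is removed to first order by
corrections `δF, δG` of size `p^j`, found by solving `δF G + F δG = g - F G` (a Sylvester system
whose determinant is the resultant), and the remaining error `δF δG` is `O(p^(2j))`. Once
`j > n` every step gains precision, so completeness of `ℤ_p` produces an exact factorization
of `g` into two monic quadratics.
-/

open Polynomial

theorem exists_seq_of_forall_exists {α : Type*} {P : ℕ → α → Prop} {Q : ℕ → α → α → Prop}
    {x₀ : α} (h₀ : P 0 x₀) (step : ∀ i x, P i x → ∃ y, P (i + 1) y ∧ Q i x y) :
    ∃ x : ℕ → α, ∀ i, P i (x i) ∧ Q i (x i) (x (i + 1)) := by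
  choose! next hnext using step
  let x : ℕ → α := fun i => Nat.rec x₀ next i
  have hP (i : ℕ) : P i (x i) := by
    induction i with
    | zero => exact h₀
    | succ i ih => exact (hnext i _ ih).1
  exact ⟨x, fun i => ⟨hP i, (hnext i _ (hP i)).2⟩⟩

variable {R : Type*} [CommRing R] {π : R}

section Adic

theorem smodEq_span_singleton_pow_iff {n : ℕ} {x y : R} :
    x ≡ y [SMOD (Ideal.span {π} ^ n • ⊤ : Submodule R R)] ↔ π ^ n ∣ x - y := by
  rw [SModEq.sub_mem, smul_eq_mul, Ideal.mul_top, Ideal.span_singleton_pow,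
    Ideal.mem_span_singleton]

theorem eq_zero_of_forall_pow_dvd [IsHausdorff (Ideal.span {π}) R] {x : R}
    (h : ∀ n, π ^ n ∣ x) : x = 0 :=
  IsHausdorff.haus ‹_› x fun n => smodEq_span_singleton_pow_iff.mpr (by simpa using h n)

theorem Polynomial.eq_zero_of_forall_C_pow_dvd [IsHausdorff (Ideal.span {π}) R] {f : R[X]}
    (h : ∀ n, C (π ^ n) ∣ f) : f = 0 := by
  ext i
  exact eq_zero_of_forall_pow_dvd fun n => (C_dvd_iff_dvd_coeff _ _).mp (h n) i

theorem exists_forall_pow_dvd_sub [IsPrecomplete (Ideal.span {π}) R] {x : ℕ → R}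
    (h : ∀ n, π ^ n ∣ x (n + 1) - x n) : ∃ L, ∀ n, π ^ n ∣ x n - L := by
  have hcauchy {m n : ℕ} (hmn : m ≤ n) : π ^ m ∣ x m - x n := by
    induction n, hmn using Nat.le_induction with
    | base => simp
    | succ n hmn ih => simpa using dvd_sub ih ((pow_dvd_pow π hmn).trans (h n))
  obtain ⟨L, hL⟩ :=
    IsPrecomplete.prec ‹_› fun hmn => smodEq_span_singleton_pow_iff.mpr (hcauchy hmn)
  exact ⟨L, fun n => smodEq_span_singleton_pow_iff.mp (hL n)⟩

theorem isUnit_add_mul_of_mem_jacobson (hπ : π ∈ (⊥ : Ideal R).jacobson) {u : R}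
    (hu : IsUnit u) (x : R) : IsUnit (u + π * x) := by
  obtain ⟨v, rfl⟩ := hu
  have h : (v : R) + π * x = v * (π * (x * ↑v⁻¹) + 1) := by
    linear_combination (-(π * x)) * v.mul_inv
  rw [h]
  exact v.isUnit.mul (Ideal.mem_jacobson_bot.mp hπ _)

end Adic

theorem Polynomial.dvd_coeffs_of_C_dvd_cubic {r e₃ e₂ e₁ e₀ : R}
    (h : C r ∣ C e₃ * X ^ 3 + C e₂ * X ^ 2 + C e₁ * X + C e₀) :
    r ∣ e₃ ∧ r ∣ e₂ ∧ r ∣ e₁ ∧ r ∣ e₀ := by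
  rw [C_dvd_iff_dvd_coeff] at h
  exact ⟨by simpa using h 3, by simpa using h 2, by simpa using h 1, by simpa using h 0⟩

section MonicQuadratic

noncomputable def monicQuadratic (a b : R) : R[X] := X ^ 2 + C a * X + C b

theorem monic_monicQuadratic [Nontrivial R] (a b : R) : (monicQuadratic a b).Monic := by
  unfold monicQuadratic
  monicity!

theorem natDegree_monicQuadratic [Nontrivial R] (a b : R) :
    (monicQuadratic a b).natDegree = 2 := by
  unfold monicQuadratic
  compute_degree!

theorem not_irreducible_monicQuadratic_mul [Nontrivial R] (a b c d : R) :
    ¬ Irreducible (monicQuadratic a b * monicQuadratic c d) := by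
  have not_isUnit (a b : R) : ¬ IsUnit (monicQuadratic a b) := fun h => by
    simpa [(monic_monicQuadratic a b).isUnit_iff.mp h] using natDegree_monicQuadratic a b
  exact fun h => (h.isUnit_or_isUnit rfl).elim (not_isUnit a b) (not_isUnit c d)

theorem C_dvd_monicQuadratic_mul_sub {r a b c d a' b' c' d' : R} (ha : r ∣ a - a')
    (hb : r ∣ b - b') (hc : r ∣ c - c') (hd : r ∣ d - d') :
    C r ∣ monicQuadratic a b * monicQuadratic c d -
      monicQuadratic a' b' * monicQuadratic c' d' := by
  have C_dvd_sub {a b a' b' : R} (ha : r ∣ a - a') (hb : r ∣ b - b') :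
      C r ∣ monicQuadratic a b - monicQuadratic a' b' := by
    have h : monicQuadratic a b - monicQuadratic a' b' = C (a - a') * X + C (b - b') := by
      simp only [monicQuadratic, map_sub]; ring
    rw [h]
    exact dvd_add ((map_dvd C ha).mul_right X) (map_dvd C hb)
  rw [show monicQuadratic a b * monicQuadratic c d - monicQuadratic a' b' * monicQuadratic c' d' =
      monicQuadratic a b * (monicQuadratic c d - monicQuadratic c' d') +
        (monicQuadratic a b - monicQuadratic a' b') * monicQuadratic c' d' by ring]
  exact dvd_add ((C_dvd_sub hc hd).mul_left _) ((C_dvd_sub ha hb).mul_right _)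

theorem Polynomial.Monic.sub_monicQuadratic_mul {g : R[X]} (hg : g.Monic)
    (hg4 : g.natDegree = 4) (a b c d : R) :
    g - monicQuadratic a b * monicQuadratic c d =
      C (g.coeff 3 - (a + c)) * X ^ 3 + C (g.coeff 2 - (b + d + a * c)) * X ^ 2 +
        C (g.coeff 1 - (a * d + b * c)) * X + C (g.coeff 0 - b * d) := by
  conv_lhs => rw [hg.as_sum, hg4]
  simp only [Finset.sum_range_succ, Finset.sum_range_zero, monicQuadratic, map_sub, map_add,
    map_mul]
  ring

end MonicQuadratic

section Newton

structure IsSeparatedPair (π : R) (n : ℕ) (a b c d : R) : Prop where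
  dvd_c : π ∣ c
  dvd_d : π ∣ d
  pow_dvd_sub_linear : π ^ n ∣ a - c
  exists_sub_const : ∃ w, b - d = π ^ n * w ∧ IsUnit w

namespace IsSeparatedPair

variable {n : ℕ} {a b c d : R}

/-- `w² - c u w + d u²` is the resultant of `X² + a X + b` and `X² + c X + d`, divided by
`π ^ (2 * n)`. -/
theorem exists_isUnit (hπ : π ∈ (⊥ : Ideal R).jacobson) (hs : IsSeparatedPair π n a b c d) :
    ∃ u w, a - c = π ^ n * u ∧ b - d = π ^ n * w ∧ IsUnit (w ^ 2 - c * u * w + d * u ^ 2) := by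
  obtain ⟨u, hu⟩ := hs.pow_dvd_sub_linear
  obtain ⟨w, hw, hw_unit⟩ := hs.exists_sub_const
  obtain ⟨c', rfl⟩ := hs.dvd_c
  obtain ⟨d', rfl⟩ := hs.dvd_d
  refine ⟨u, w, hu, hw, ?_⟩
  convert isUnit_add_mul_of_mem_jacobson hπ (hw_unit.pow 2) (d' * u ^ 2 - c' * u * w) using 1
  ring

theorem of_pow_succ_dvd_sub (hπ : π ∈ (⊥ : Ideal R).jacobson)
    (hs : IsSeparatedPair π n a b c d) {a' b' c' d' : R} (ha : π ^ (n + 1) ∣ a' - a)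
    (hb : π ^ (n + 1) ∣ b' - b) (hc : π ^ (n + 1) ∣ c' - c) (hd : π ^ (n + 1) ∣ d' - d) :
    IsSeparatedPair π n a' b' c' d' := by
  have weaken {x : R} (hx : π ^ (n + 1) ∣ x) : π ^ n ∣ x ∧ π ∣ x :=
    ⟨(pow_dvd_pow π n.le_succ).trans hx, (dvd_pow_self π n.succ_ne_zero).trans hx⟩
  refine ⟨?_, ?_, ?_, ?_⟩
  · simpa using dvd_add hs.dvd_c (weaken hc).2
  · simpa using dvd_add hs.dvd_d (weaken hd).2
  · simpa using dvd_sub (dvd_add hs.pow_dvd_sub_linear (weaken ha).1) (weaken hc).1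
  · obtain ⟨w, hw, hw_unit⟩ := hs.exists_sub_const
    obtain ⟨t, ht⟩ := dvd_sub hb hd
    refine ⟨w + π * t, ?_, isUnit_add_mul_of_mem_jacobson hπ hw_unit t⟩
    linear_combination hw + ht

end IsSeparatedPair

theorem exists_linear_correction {n j : ℕ} {a b c d u w e₃ e₂ e₁ e₀ : R}
    (hu : a - c = π ^ n * u) (hw : b - d = π ^ n * w)
    (hρ : IsUnit (w ^ 2 - c * u * w + d * u ^ 2)) (h₃ : π ^ (n + j) ∣ e₃)
    (h₂ : π ^ (n + j) ∣ e₂) (h₁ : π ^ (n + j) ∣ e₁) (h₀ : π ^ (n + j) ∣ e₀) :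
    ∃ δa δb δc δd : R, π ^ j ∣ δa ∧ π ^ j ∣ δb ∧ π ^ j ∣ δc ∧ π ^ j ∣ δd ∧
      (C δa * X + C δb) * monicQuadratic c d + monicQuadratic a b * (C δc * X + C δd) =
        C e₃ * X ^ 3 + C e₂ * X ^ 2 + C e₁ * X + C e₀ := by
  obtain ⟨r, hr⟩ := hρ.exists_left_inv
  obtain ⟨f₃, rfl⟩ := h₃
  obtain ⟨f₂, rfl⟩ := h₂
  obtain ⟨f₁, rfl⟩ := h₁
  obtain ⟨f₀, rfl⟩ := h₀
  obtain rfl : a = c + π ^ n * u := by rw [← hu]; ring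
  obtain rfl : b = d + π ^ n * w := by rw [← hw]; ring
  -- After eliminating `δa` and `δb`, the `X¹` and `X⁰` equations form a `2 × 2` system in
  -- `(δc, δd)` with determinant `π ^ (2 * n) * (w ^ 2 - c * u * w + d * u ^ 2)`.
  set g₁ := f₁ - c * f₂ + (c ^ 2 - d) * f₃
  set g₀ := f₀ - d * f₂ + c * d * f₃
  set δc := π ^ j * (r * (w * g₁ - u * g₀))
  set δd := π ^ j * (r * ((w - c * u) * g₀ + d * u * g₁))
  set δa := π ^ (n + j) * f₃ - δc
  set δb := π ^ (n + j) * (f₂ - c * f₃) - π ^ n * u * δc - δd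
  have hj : π ^ j ∣ π ^ (n + j) := pow_dvd_pow π (Nat.le_add_left j n)
  refine ⟨δa, δb, δc, δd, dvd_sub (hj.mul_right _) (dvd_mul_right _ _),
    dvd_sub (dvd_sub (hj.mul_right _) ((dvd_mul_right _ _).mul_left _)) (dvd_mul_right _ _),
    dvd_mul_right _ _, dvd_mul_right _ _, ?_⟩
  have expand : (C δa * X + C δb) * monicQuadratic c d +
      monicQuadratic (c + π ^ n * u) (d + π ^ n * w) * (C δc * X + C δd) =
      C (δa + δc) * X ^ 3 + C (δb + δd + (c + π ^ n * u) * δc + c * δa) * X ^ 2 +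
        C ((c + π ^ n * u) * δd + d * δa + (d + π ^ n * w) * δc + c * δb) * X +
          C ((d + π ^ n * w) * δd + d * δb) := by
    simp only [monicQuadratic, map_add, map_mul]; ring
  have e₃_eq : δa + δc = π ^ (n + j) * f₃ := by simp only [δa]; ring
  have e₂_eq : δb + δd + (c + π ^ n * u) * δc + c * δa = π ^ (n + j) * f₂ := by
    simp only [δa, δb]; ring
  have e₁_eq :
      (c + π ^ n * u) * δd + d * δa + (d + π ^ n * w) * δc + c * δb = π ^ (n + j) * f₁ := by
    simp only [δa, δb, δc, δd, g₁, g₀, pow_add]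
    linear_combination (π ^ n * π ^ j * g₁) * hr
  have e₀_eq : (d + π ^ n * w) * δd + d * δb = π ^ (n + j) * f₀ := by
    simp only [δb, δc, δd, g₁, g₀, pow_add]
    linear_combination (π ^ n * π ^ j * g₀) * hr
  rw [expand, e₃_eq, e₂_eq, e₁_eq, e₀_eq]

theorem exists_newton_step (hπ : π ∈ (⊥ : Ideal R).jacobson) {g : R[X]} (hg : g.Monic)
    (hg4 : g.natDegree = 4) {n j : ℕ} (hj : n < j) {a b c d : R}
    (hs : IsSeparatedPair π n a b c d)
    (happrox : C (π ^ (n + j)) ∣ g - monicQuadratic a b * monicQuadratic c d) :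
    ∃ a' b' c' d', IsSeparatedPair π n a' b' c' d' ∧
      C (π ^ (n + j + 1)) ∣ g - monicQuadratic a' b' * monicQuadratic c' d' ∧
      π ^ j ∣ a' - a ∧ π ^ j ∣ b' - b ∧ π ^ j ∣ c' - c ∧ π ^ j ∣ d' - d := by
  obtain ⟨u, w, hu, hw, hρ⟩ := hs.exists_isUnit hπ
  have hE := hg.sub_monicQuadratic_mul hg4 a b c d
  obtain ⟨h₃, h₂, h₁, h₀⟩ := dvd_coeffs_of_C_dvd_cubic (hE ▸ happrox)
  obtain ⟨δa, δb, δc, δd, hδa, hδb, hδc, hδd, hlin⟩ :=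
    exists_linear_correction hu hw hρ h₃ h₂ h₁ h₀
  have add_linear (x y δx δy : R) :
      monicQuadratic (x + δx) (y + δy) = monicQuadratic x y + (C δx * X + C δy) := by
    simp only [monicQuadratic, map_add]; ring
  have C_dvd_linear {δx δy : R} (hx : π ^ j ∣ δx) (hy : π ^ j ∣ δy) :
      C (π ^ j) ∣ C δx * X + C δy :=
    dvd_add ((map_dvd C hx).mul_right X) (map_dvd C hy)
  have hsucc {δ : R} (h : π ^ j ∣ δ) : π ^ (n + 1) ∣ δ := (pow_dvd_pow π hj).trans h
  refine ⟨a + δa, b + δb, c + δc, d + δd,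
    hs.of_pow_succ_dvd_sub hπ (by simpa using hsucc hδa) (by simpa using hsucc hδb)
      (by simpa using hsucc hδc) (by simpa using hsucc hδd), ?_,
    by simpa using hδa, by simpa using hδb, by simpa using hδc, by simpa using hδd⟩
  have herr : g - monicQuadratic (a + δa) (b + δb) * monicQuadratic (c + δc) (d + δd) =
      -((C δa * X + C δb) * (C δc * X + C δd)) := by
    rw [add_linear, add_linear]
    linear_combination hE.trans hlin.symm
  rw [herr, dvd_neg]
  refine (map_dvd C (pow_dvd_pow π (by omega : n + j + 1 ≤ j + j))).trans ?_
  rw [pow_add, map_mul]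
  exact mul_dvd_mul (C_dvd_linear hδa hδb) (C_dvd_linear hδc hδd)

theorem exists_eq_monicQuadratic_mul [IsAdicComplete (Ideal.span {π}) R] {g : R[X]}
    (hg : g.Monic) (hg4 : g.natDegree = 4) {n : ℕ} {a b c d : R}
    (hs : IsSeparatedPair π n a b c d)
    (happrox : C (π ^ (2 * n + 1)) ∣ g - monicQuadratic a b * monicQuadratic c d) :
    ∃ a' b' c' d', g = monicQuadratic a' b' * monicQuadratic c' d' := by
  have hπ : π ∈ (⊥ : Ideal R).jacobson :=
    IsAdicComplete.le_jacobson_bot _ (Ideal.mem_span_singleton_self π)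
  obtain ⟨q, hq⟩ := exists_seq_of_forall_exists
    (P := fun i (q : R × R × R × R) => IsSeparatedPair π n q.1 q.2.1 q.2.2.1 q.2.2.2 ∧
      C (π ^ (2 * n + 1 + i)) ∣ g - monicQuadratic q.1 q.2.1 * monicQuadratic q.2.2.1 q.2.2.2)
    (Q := fun i q q' => π ^ i ∣ q'.1 - q.1 ∧ π ^ i ∣ q'.2.1 - q.2.1 ∧
      π ^ i ∣ q'.2.2.1 - q.2.2.1 ∧ π ^ i ∣ q'.2.2.2 - q.2.2.2)
    (x₀ := (a, b, c, d)) ⟨hs, happrox⟩ fun i q ⟨hs, happrox⟩ => by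
      obtain ⟨a', b', c', d', hs', happrox', ha, hb, hc, hd⟩ :=
        exists_newton_step hπ hg hg4 (j := n + 1 + i) (by omega) hs
          (by rwa [show n + (n + 1 + i) = 2 * n + 1 + i by ring])
      have hi : π ^ i ∣ π ^ (n + 1 + i) := pow_dvd_pow π (by omega)
      exact ⟨(a', b', c', d'),
        ⟨hs', by rwa [show 2 * n + 1 + (i + 1) = n + (n + 1 + i) + 1 by ring]⟩,
        hi.trans ha, hi.trans hb, hi.trans hc, hi.trans hd⟩
  obtain ⟨A, hA⟩ := exists_forall_pow_dvd_sub (x := fun i => (q i).1) fun i => (hq i).2.1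
  obtain ⟨B, hB⟩ := exists_forall_pow_dvd_sub (x := fun i => (q i).2.1) fun i => (hq i).2.2.1
  obtain ⟨C', hC⟩ :=
    exists_forall_pow_dvd_sub (x := fun i => (q i).2.2.1) fun i => (hq i).2.2.2.1
  obtain ⟨D, hD⟩ :=
    exists_forall_pow_dvd_sub (x := fun i => (q i).2.2.2) fun i => (hq i).2.2.2.2
  refine ⟨A, B, C', D, sub_eq_zero.mp (eq_zero_of_forall_C_pow_dvd (π := π) fun i => ?_)⟩
  rw [← sub_add_sub_cancel _ (monicQuadratic (q i).1 (q i).2.1 *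
    monicQuadratic (q i).2.2.1 (q i).2.2.2)]
  have hi : C (π ^ i) ∣ C (π ^ (2 * n + 1 + i)) := map_dvd C (pow_dvd_pow π (by omega))
  exact dvd_add (hi.trans (hq i).1.2) (C_dvd_monicQuadratic_mul_sub (hA i) (hB i) (hC i) (hD i))

end Newton

namespace PadicInt

variable {p : ℕ} [Fact p.Prime]

instance : IsAdicComplete (Ideal.span {(p : ℤ_[p])}) ℤ_[p] :=
  maximalIdeal_eq_span_p (p := p) ▸ inferInstance

theorem isUnit_of_not_dvd {x : ℤ_[p]} (hx : ¬ (p : ℤ_[p]) ∣ x) : IsUnit x :=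
  isUnit_iff.mpr (le_antisymm (norm_le_one x) (not_lt.mp (mt (norm_lt_one_iff_dvd x).mp hx)))

theorem C_pow_dvd_sub_of_map_toZModPow_eq {n : ℕ} {f g : ℤ_[p][X]}
    (h : g.map (toZModPow n) = f.map (toZModPow n)) : C ((p : ℤ_[p]) ^ n) ∣ g - f := by
  refine (C_dvd_iff_dvd_coeff _ _).mpr fun i => ?_
  rw [← Ideal.mem_span_singleton, ← ker_toZModPow, RingHom.mem_ker, coeff_sub, map_sub,
    sub_eq_zero, ← coeff_map, ← coeff_map, h]

end PadicInt

theorem stmt_15_general (p : ℕ) [Fact p.Prime] (α β γ : ℤ_[p]) (k : ℕ)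
    (hdiff : (p : ℤ_[p]) ^ k ∣ (β - γ)) (hdiff' : ¬ (p : ℤ_[p]) ^ (k + 1) ∣ (β - γ))
    (hα : (p : ℤ_[p]) ^ k ∣ α) :
    ∀ g : Polynomial ℤ_[p], g.Monic → g.natDegree = 4 →
      g.map (PadicInt.toZModPow (2 * k + 4)) =
        ((X ^ 2 + C ((p : ℤ_[p]) * α) * X + C ((p : ℤ_[p]) * β)) *
          (X ^ 2 - C ((p : ℤ_[p]) * α) * X + C ((p : ℤ_[p]) * γ))).map
            (PadicInt.toZModPow (2 * k + 4)) →
      ¬ Irreducible g := by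
  intro g hmon hdeg hmap
  obtain ⟨α', rfl⟩ := hα
  obtain ⟨w, hw⟩ := hdiff
  have hw_unit : IsUnit w := PadicInt.isUnit_of_not_dvd fun h => hdiff' <| by
    rw [hw, pow_succ]; exact mul_dvd_mul_left _ h
  have hs : IsSeparatedPair (p : ℤ_[p]) (k + 1) (p * (p ^ k * α')) (p * β)
      (-(p * (p ^ k * α'))) (p * γ) :=
    ⟨dvd_neg.mpr (dvd_mul_right _ _), dvd_mul_right _ _, ⟨2 * α', by ring⟩,
      ⟨w, by rw [← mul_sub, hw]; ring, hw_unit⟩⟩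
  have happrox := PadicInt.C_pow_dvd_sub_of_map_toZModPow_eq hmap
  rw [sub_eq_add_neg _ (C _ * X), ← neg_mul, ← map_neg] at happrox
  have hprec : C ((p : ℤ_[p]) ^ (2 * (k + 1) + 1)) ∣ C ((p : ℤ_[p]) ^ (2 * k + 4)) :=
    map_dvd C (pow_dvd_pow _ (by omega))
  obtain ⟨a, b, c, d, rfl⟩ := exists_eq_monicQuadratic_mul hmon hdeg hs (hprec.trans happrox)
  exact not_irreducible_monicQuadratic_mul a b c d

/-- Claim 3, Case 1: with `f = (x² + pαx + pβ)(x² - pαx + pγ)`, `p ∤ β`, `p ∤ γ`,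
`p^k` exactly dividing `β - γ` and `p^k ∣ α`, every monic quartic
`g ≡ f (mod p^(2k+4))` is reducible in `ℤ_p[x]`. -/
theorem stmt_15 (p : ℕ) [Fact p.Prime] (hodd : p ≠ 2) (α β γ : ℤ_[p]) (k : ℕ)
    (hβ : ¬ (p : ℤ_[p]) ∣ β) (hγ : ¬ (p : ℤ_[p]) ∣ γ)
    (hdiff : (p : ℤ_[p]) ^ k ∣ (β - γ)) (hdiff' : ¬ (p : ℤ_[p]) ^ (k + 1) ∣ (β - γ))
    (hα : (p : ℤ_[p]) ^ k ∣ α) :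
    ∀ g : Polynomial ℤ_[p], g.Monic → g.natDegree = 4 →
      g.map (PadicInt.toZModPow (2 * k + 4)) =
        ((X ^ 2 + C ((p : ℤ_[p]) * α) * X + C ((p : ℤ_[p]) * β)) *
          (X ^ 2 - C ((p : ℤ_[p]) * α) * X + C ((p : ℤ_[p]) * γ))).map
            (PadicInt.toZModPow (2 * k + 4)) →
      ¬ Irreducible g :=
  stmt_15_general p α β γ k hdiff hdiff' hα
end
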